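/- Suppose |Ω||T| ≥ 3. Then the Rademacher process satisfies E[ sup_{τ∈T} |Z'(τ)| ] ≤ |A|·M₃·( 3·√(log(2|Ω||T|)) + 1.61 ). -/

import Mathlib

/-!
Every derivative `Z'⁽ⁿ⁾` is again a Rademacher sum, with coefficient vectors of `ℓ²`-norm at most
`ωmaxⁿ σ`, `σ = √2 |A| M₃`. Take a net of `N = ⌈|Ω||T|⌉` points of `T` with covering radius
`δ = 1 / (4 ωmax)`. The mean value theorem gives
`sup_T |Z'⁽ⁿ⁾| ≤ max_net |Z'⁽ⁿ⁾| + δ sup_T |Z'⁽ⁿ⁺¹⁾|`. Iterating, the remainder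
`δᴶ sup_T |Z'⁽ᴶ⁾| = O(4⁻ᴶ)` vanishes, so `sup_T |Z'| ≤ ∑ⱼ δʲ max_net |Z'⁽ʲ⁾|`.
The modulus of a complex number is at most `sec(π/8)` times its largest projection on the eight
directions `e^{iπl/4}`. Each such projection of a Rademacher sum is sub-Gaussian, so the expected
maximum over `8N` of them is at most `ωmaxʲ σ √(2 log 8N)`. Summing the geometric series gives
`E sup_T |Z'| ≤ (8/3) sec(π/8) |A| M₃ √(log 8N)`, and `|Ω||T| ≥ 3` turns this into the stated
constants.
-/

open MeasureTheory ProbabilityTheory Real Finset Filter Topology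
open scoped NNReal ENNReal

noncomputable section

def rademacherMeasure : Measure ℝ := (2 : ℝ≥0∞)⁻¹ • (Measure.dirac 1 + Measure.dirac (-1))

lemma integrable_rademacherMeasure (f : ℝ → ℝ) : Integrable f rademacherMeasure :=
  ((integrable_dirac enorm_lt_top).add_measure (integrable_dirac enorm_lt_top)).smul_measure
    (by simp)

lemma integral_rademacherMeasure (f : ℝ → ℝ) :
    ∫ x, f x ∂rademacherMeasure = (f 1 + f (-1)) / 2 := by
  rw [rademacherMeasure, integral_smul_measure,
    integral_add_measure (integrable_dirac enorm_lt_top) (integrable_dirac enorm_lt_top),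
    integral_dirac, integral_dirac]
  simp [div_eq_inv_mul]

lemma hasSubgaussianMGF_id_rademacherMeasure : HasSubgaussianMGF id 1 rademacherMeasure where
  integrable_exp_mul _ := integrable_rademacherMeasure _
  mgf_le t := by
    simpa [mgf, integral_rademacherMeasure, cosh_eq] using cosh_le_exp_half_sq t

namespace ProbabilityTheory.HasSubgaussianMGF

variable {Θ : Type*} [MeasurableSpace Θ] {μ : Measure Θ} {X : Θ → ℝ}

lemma of_map_eq_rademacherMeasure (hX : AEMeasurable X μ) (h : μ.map X = rademacherMeasure) :
    HasSubgaussianMGF X 1 μ :=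
  (id_map_iff hX).1 (h ▸ hasSubgaussianMGF_id_rademacherMeasure)

lemma mono {c d : ℝ≥0} (h : HasSubgaussianMGF X c μ) (hcd : c ≤ d) :
    HasSubgaussianMGF X d μ where
  integrable_exp_mul := h.integrable_exp_mul
  mgf_le t := (h.mgf_le t).trans <| exp_le_exp.2 <| by gcongr

end ProbabilityTheory.HasSubgaussianMGF

section Rademacher

variable {Θ : Type*} [MeasurableSpace Θ] {μ : Measure Θ} {κ : Type*} [Fintype κ]
  {ε : κ → Θ → ℝ}

lemma hasSubgaussianMGF_sum_mul_rademacher (hε : ∀ k, Measurable (ε k)) (hindep : iIndepFun ε μ)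
    (hrad : ∀ k, μ.map (ε k) = rademacherMeasure) (r : κ → ℝ) :
    HasSubgaussianMGF (fun θ ↦ ∑ k, r k * ε k θ) (∑ k, ‖r k‖₊ ^ 2) μ := by
  have hk (k : κ) : HasSubgaussianMGF (fun θ ↦ r k * ε k θ) (‖r k‖₊ ^ 2) μ := by
    convert (HasSubgaussianMGF.of_map_eq_rademacherMeasure (hε k).aemeasurable
      (hrad k)).const_mul (r k) using 1
    apply NNReal.eq
    simp only [coe_nnnorm, norm_eq_abs, NNReal.coe_pow, sq_abs]
    exact (mul_one _).symm
  exact HasSubgaussianMGF.sum_of_iIndepFun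
    (hindep.comp (fun k x ↦ r k * x) fun k ↦ measurable_const_mul (r k)) fun k _ ↦ hk k

lemma hasSubgaussianMGF_re_mul_sum_rademacher (hε : ∀ k, Measurable (ε k))
    (hindep : iIndepFun ε μ) (hrad : ∀ k, μ.map (ε k) = rademacherMeasure) {w : ℂ} (hw : ‖w‖ ≤ 1)
    (z : κ → ℂ) :
    HasSubgaussianMGF (fun θ ↦ (w * ∑ k, (ε k θ : ℂ) * z k).re) (∑ k, ‖z k‖₊ ^ 2) μ := by
  refine ((hasSubgaussianMGF_sum_mul_rademacher hε hindep hrad fun k ↦ (w * z k).re).congr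
    (ae_of_all _ fun θ ↦ ?_)).mono (sum_le_sum fun k _ ↦ ?_)
  · simp only [mul_sum, Complex.re_sum]
    congr with k
    rw [mul_left_comm, Complex.re_ofReal_mul, mul_comm]
  · gcongr
    rw [← NNReal.coe_le_coe, coe_nnnorm, coe_nnnorm, norm_eq_abs]
    exact (Complex.abs_re_le_norm _).trans (by
      rw [norm_mul]; exact mul_le_of_le_one_left (norm_nonneg _) hw)

end Rademacher

lemma le_sqrt_of_forall_le_div_add_mul {x a b : ℝ} (ha : 0 ≤ a) (hb : 0 ≤ b)
    (h : ∀ t, 0 < t → x ≤ a / t + b * t) : x ≤ √(4 * a * b) := by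
  have hη : ∀ η > 0, x ≤ √(4 * (a + η) * (b + η)) := fun η hη ↦ by
    have hbη : 0 < √(b + η) := sqrt_pos.2 (by linarith)
    have haη : 0 < √(a + η) := sqrt_pos.2 (by linarith)
    calc x ≤ a / (√(a + η) / √(b + η)) + b * (√(a + η) / √(b + η)) := h _ (by positivity)
      _ ≤ (a + η) / (√(a + η) / √(b + η)) + (b + η) * (√(a + η) / √(b + η)) := by
        gcongr <;> linarith
      _ = √(4 * (a + η) * (b + η)) := by
        rw [show 4 * (a + η) * (b + η) = (2 * (√(a + η) * √(b + η))) ^ 2 by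
            rw [mul_pow, mul_pow, sq_sqrt (by linarith), sq_sqrt (by linarith)]; ring,
          sqrt_sq (by positivity)]
        field_simp
        rw [sq_sqrt (by linarith), sq_sqrt (by linarith)]
        ring
  have hcont : Tendsto (fun η ↦ √(4 * (a + η) * (b + η))) (𝓝[>] 0) (𝓝 √(4 * a * b)) := by
    have : Continuous fun η ↦ √(4 * (a + η) * (b + η)) := by fun_prop
    simpa using (this.tendsto 0).mono_left nhdsWithin_le_nhds
  exact ge_of_tendsto hcont (eventually_nhdsWithin_of_forall hη)

section Maximal

variable {Θ : Type*} [MeasurableSpace Θ] {μ : Measure Θ} {ι : Type*} [Fintype ι] [Nonempty ι]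

lemma integrable_sup' {Y : ι → Θ → ℝ} (hY : ∀ v, Integrable (Y v) μ) :
    Integrable (fun θ ↦ univ.sup' univ_nonempty fun v ↦ Y v θ) μ := by
  simp_rw [← Finset.sup'_apply]
  exact Finset.sup'_induction (p := fun g : Θ → ℝ ↦ Integrable g μ) _ _
    (fun _ h₁ _ h₂ ↦ h₁.sup h₂) fun v _ ↦ hY v

variable [IsProbabilityMeasure μ] {Y : ι → Θ → ℝ} {c : ℝ≥0}

lemma integral_sup'_le_log_card_div_add (hY : ∀ v, HasSubgaussianMGF (Y v) c μ) {t : ℝ}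
    (ht : 0 < t) :
    ∫ θ, univ.sup' univ_nonempty (fun v ↦ Y v θ) ∂μ ≤ log (Fintype.card ι) / t + c / 2 * t := by
  set u := ∑ v, mgf (Y v) μ t
  set P : Θ → ℝ := fun θ ↦ ∑ v, exp (t * Y v θ)
  have hu : 0 < u := Finset.sum_pos (fun v _ ↦ mgf_pos ((hY v).integrable_exp_mul t)) univ_nonempty
  have hPint : Integrable P μ := integrable_finsetSum _ fun v _ ↦ (hY v).integrable_exp_mul t
  have hPu : ∫ θ, P θ ∂μ = u := integral_finsetSum _ fun v _ ↦ (hY v).integrable_exp_mul t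
  -- tangent line of the concave `log` at `u`
  have hpt : ∀ θ, univ.sup' univ_nonempty (fun v ↦ Y v θ) ≤ (P θ / u + (log u - 1)) / t := by
    intro θ
    obtain ⟨v, -, hv⟩ := exists_mem_eq_sup' univ_nonempty fun v ↦ Y v θ
    have hP : exp (t * Y v θ) ≤ P θ :=
      single_le_sum (f := fun v ↦ exp (t * Y v θ)) (fun _ _ ↦ (exp_pos _).le) (mem_univ v)
    have hlog := log_le_sub_one_of_pos (div_pos ((exp_pos _).trans_le hP) hu)
    rw [log_div ((exp_pos _).trans_le hP).ne' hu.ne'] at hlog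
    rw [hv, le_div_iff₀ ht]
    have := log_le_log (exp_pos _) hP
    rw [log_exp] at this
    linarith
  have hu_le : u ≤ Fintype.card ι * exp (c * t ^ 2 / 2) := by
    calc u ≤ ∑ _v : ι, exp (c * t ^ 2 / 2) := Finset.sum_le_sum fun v _ ↦ (hY v).mgf_le t
      _ = _ := by simp
  calc ∫ θ, univ.sup' univ_nonempty (fun v ↦ Y v θ) ∂μ
      ≤ ∫ θ, (P θ / u + (log u - 1)) / t ∂μ :=
        integral_mono (integrable_sup' fun v ↦ (hY v).integrable)
          (((hPint.div_const u).add (integrable_const _)).div_const t) hpt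
    _ = log u / t := by
        rw [integral_div, integral_add (hPint.div_const u) (integrable_const _), integral_div, hPu,
          integral_const, div_self hu.ne']
        simp
    _ ≤ log (Fintype.card ι * exp (c * t ^ 2 / 2)) / t := by gcongr
    _ = log (Fintype.card ι) / t + c / 2 * t := by
        rw [log_mul (by simp) (exp_pos _).ne', log_exp]
        field_simp

lemma integral_sup'_le_of_hasSubgaussianMGF (hY : ∀ v, HasSubgaussianMGF (Y v) c μ) :
    ∫ θ, univ.sup' univ_nonempty (fun v ↦ Y v θ) ∂μ ≤ √(2 * c * log (Fintype.card ι)) := by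
  have h := le_sqrt_of_forall_le_div_add_mul (log_nonneg (by simp [Nat.one_le_iff_ne_zero]))
    (by positivity : (0 : ℝ) ≤ c / 2) fun t ht ↦ integral_sup'_le_log_card_div_add hY ht
  convert h using 2
  ring

end Maximal

def unitDir (q : ℕ) (l : Fin q) : ℂ := Complex.exp (↑(2 * π * l / q) * Complex.I)

lemma norm_unitDir (q : ℕ) (l : Fin q) : ‖unitDir q l‖ = 1 := Complex.norm_exp_ofReal_mul_I _

lemma exists_norm_mul_cos_le_re_unitDir_mul (q : ℕ) [NeZero q] (z : ℂ) :
    ∃ l : Fin q, ‖z‖ * cos (π / q) ≤ (unitDir q l * z).re := by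
  have hq : (0 : ℝ) < q := by simp [Nat.pos_of_neZero]
  obtain ⟨k, hk⟩ : ∃ k : ℤ, |z.arg + 2 * π * k / q| ≤ π / q := by
    set x := -(z.arg * q / (2 * π)) with hx
    refine ⟨round x, ?_⟩
    rw [show z.arg + 2 * π * round x / q = 2 * π / q * -(x - round x) by rw [hx]; field_simp; ring,
      abs_mul, abs_neg, abs_of_pos (by positivity)]
    calc 2 * π / q * |x - round x| ≤ 2 * π / q * (1 / 2) := by gcongr; exact abs_sub_round x
      _ = π / q := by ring
  have hkq : 0 ≤ k % q := Int.emod_nonneg _ (by simp [NeZero.ne q])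
  have hkq' : k % q < q := Int.emod_lt_of_pos _ (by simp [Nat.pos_of_neZero])
  refine ⟨⟨(k % q).toNat, by omega⟩, ?_⟩
  have hl : (((k % q).toNat : ℕ) : ℝ) = k - (k / q : ℤ) * q := by
    rw [← Int.cast_natCast, Int.toNat_of_nonneg hkq, Int.emod_def]
    push_cast
    ring
  nth_rewrite 2 [← Complex.norm_mul_exp_arg_mul_I z]
  rw [unitDir, mul_left_comm, ← Complex.exp_add, ← add_mul,
    ← Complex.ofReal_add, Complex.re_ofReal_mul, Complex.exp_ofReal_mul_I_re]
  simp only [hl]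
  rw [show 2 * π * (k - (k / q : ℤ) * q) / q + z.arg
      = z.arg + 2 * π * k / q - (k / q : ℤ) * (2 * π) by field_simp; ring,
    cos_sub_int_mul_two_pi, ← cos_abs (z.arg + _)]
  exact mul_le_mul_of_nonneg_left (cos_le_cos_of_nonneg_of_le_pi (abs_nonneg _)
    (div_le_self pi_pos.le (Nat.one_le_cast.2 (Nat.pos_of_neZero q))) hk) (norm_nonneg z)

lemma cos_pi_div_pos {q : ℕ} (hq : 2 < q) : 0 < cos (π / q) := by
  have hq' : (2 : ℝ) < q := by exact_mod_cast hq
  exact cos_pos_of_mem_Ioo ⟨by linarith [pi_pos, div_pos pi_pos (two_pos.trans hq')],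
    div_lt_div_of_pos_left pi_pos two_pos hq'⟩

def maxProj {ι : Type*} [Fintype ι] [Nonempty ι] (q : ℕ) [NeZero q] (w : ι → ℂ) : ℝ :=
  univ.sup' univ_nonempty fun v : ι × Fin q ↦ (unitDir q v.2 * w v.1).re

lemma norm_le_maxProj_div_cos {ι : Type*} [Fintype ι] [Nonempty ι] {q : ℕ} [NeZero q]
    (hq : 2 < q) (w : ι → ℂ) (i : ι) : ‖w i‖ ≤ maxProj q w / cos (π / q) := by
  obtain ⟨l, hl⟩ := exists_norm_mul_cos_le_re_unitDir_mul q (w i)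
  rw [le_div_iff₀ (cos_pi_div_pos hq)]
  exact hl.trans (le_sup' (fun v : ι × Fin q ↦ (unitDir q v.2 * w v.1).re) (mem_univ (i, l)))

lemma norm_sum_ofReal_mul_le {κ : Type*} [Fintype κ] (x : κ → ℝ) {z : κ → ℂ} {C : ℝ} (hC : 0 ≤ C)
    (hz : ∑ k, ‖z k‖ ^ 2 ≤ C ^ 2) : ‖∑ k, (x k : ℂ) * z k‖ ≤ C * ∑ k, |x k| := by
  rw [mul_sum]
  refine (norm_sum_le _ _).trans (sum_le_sum fun k _ ↦ ?_)
  rw [norm_mul, Complex.norm_real, norm_eq_abs, mul_comm C]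
  gcongr
  exact (pow_le_pow_iff_left₀ (norm_nonneg _) hC two_ne_zero).1
    ((single_le_sum (fun k _ ↦ sq_nonneg ‖z k‖) (mem_univ k)).trans hz)

lemma norm_le_sum_geom_add_of_hasDerivAt {E : Type*} [NormedAddCommGroup E] [NormedSpace ℝ E]
    {f : ℕ → ℝ → E} (hf : ∀ n τ, HasDerivAt (f n) (f (n + 1) τ) τ) {s : Set ℝ} (hs : Convex ℝ s)
    {ι : Type*} {p : ι → ℝ} (hp : ∀ i, p i ∈ s) {δ : ℝ}
    (hnet : ∀ τ ∈ s, ∃ i, |τ - p i| ≤ δ) {M B : ℕ → ℝ} (hM : ∀ n i, ‖f n (p i)‖ ≤ M n)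
    (hB : ∀ n, ∀ τ ∈ s, ‖f n τ‖ ≤ B n) (J : ℕ) :
    ∀ n, ∀ τ ∈ s, ‖f n τ‖ ≤ ∑ j ∈ range J, δ ^ j * M (n + j) + δ ^ J * B (n + J) := by
  induction J with
  | zero => simpa using hB
  | succ J ih =>
    intro n τ hτ
    obtain ⟨i, hi⟩ := hnet τ hτ
    have hmvt := hs.norm_image_sub_le_of_norm_hasDerivWithin_le
      (fun t _ ↦ (hf n t).hasDerivWithinAt) (ih (n + 1)) (hp i) hτ
    rw [Real.norm_eq_abs] at hmvt
    have hC : 0 ≤ ∑ j ∈ range J, δ ^ j * M (n + 1 + j) + δ ^ J * B (n + 1 + J) :=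
      (norm_nonneg _).trans (ih (n + 1) τ hτ)
    calc ‖f n τ‖ ≤ ‖f n (p i)‖ + ‖f n τ - f n (p i)‖ := norm_le_norm_add_norm_sub' _ _
      _ ≤ M n + (∑ j ∈ range J, δ ^ j * M (n + 1 + j) + δ ^ J * B (n + 1 + J)) * δ :=
        add_le_add (hM n i) (hmvt.trans (mul_le_mul_of_nonneg_left hi hC))
      _ = ∑ j ∈ range (J + 1), δ ^ j * M (n + j) + δ ^ (J + 1) * B (n + (J + 1)) := by
        rw [sum_range_succ', add_mul, sum_mul, show n + (J + 1) = n + 1 + J by omega]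
        rw [sum_congr rfl fun j _ ↦ show δ ^ (j + 1) * M (n + (j + 1))
          = δ ^ j * M (n + 1 + j) * δ by rw [show n + (j + 1) = n + 1 + j by omega]; ring]
        rw [pow_zero, one_mul, add_zero, pow_succ, mul_right_comm (δ ^ J) δ]
        abel

lemma iSup_norm_le_sum_maxProj {Z : ℕ → ℝ → ℂ}
    (hZ : ∀ n τ, HasDerivAt (Z n) (Z (n + 1) τ) τ) {s : Set ℝ} (hs : Convex ℝ s)
    {ι : Type*} [Fintype ι] [Nonempty ι] {p : ι → ℝ} (hp : ∀ i, p i ∈ s) {δ : ℝ}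
    (hnet : ∀ τ ∈ s, ∃ i, |τ - p i| ≤ δ) {K β : ℝ} (hZβ : ∀ n, ∀ τ ∈ s, ‖Z n τ‖ ≤ K ^ n * β)
    {q : ℕ} [NeZero q] (hq : 2 < q) (J : ℕ) :
    ⨆ τ ∈ s, ‖Z 0 τ‖ ≤
      ∑ j ∈ range J, δ ^ j * (maxProj q (Z j ∘ p) / cos (π / q)) + (δ * K) ^ J * β := by
  have h := norm_le_sum_geom_add_of_hasDerivAt hZ hs hp hnet
    (fun n i ↦ norm_le_maxProj_div_cos hq (Z n ∘ p) i) hZβ J 0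
  simp only [zero_add, mul_pow, mul_assoc] at h ⊢
  have hnonneg := (norm_nonneg _).trans (h _ (hp (Classical.arbitrary ι)))
  exact Real.iSup_le (fun τ ↦ Real.iSup_le (h τ) hnonneg) hnonneg

lemma le_of_forall_le_add_pow_mul {x a b r : ℝ} (hr₀ : 0 ≤ r) (hr₁ : r < 1)
    (h : ∀ J : ℕ, x ≤ a + r ^ J * b) : x ≤ a := by
  have hlim : Tendsto (fun J : ℕ ↦ a + r ^ J * b) atTop (𝓝 a) := by
    simpa using ((tendsto_pow_atTop_nhds_zero_of_lt_one hr₀ hr₁).mul_const b).const_add a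
  exact ge_of_tendsto' hlim h

lemma integral_sum_pow_mul_add_le {Θ : Type*} [MeasurableSpace Θ] {μ : Measure Θ}
    {M : ℕ → Θ → ℝ} (hM : ∀ j, Integrable (M j) μ) {β : Θ → ℝ} (hβ : Integrable β μ)
    {δ K R : ℝ} (hδ : 0 ≤ δ) (hK : 0 ≤ K) (hδK : δ * K < 1) (hR : 0 ≤ R)
    (hMR : ∀ j, ∫ θ, M j θ ∂μ ≤ K ^ j * R) (J : ℕ) :
    ∫ θ, (∑ j ∈ range J, δ ^ j * M j θ + (δ * K) ^ J * β θ) ∂μ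
      ≤ R / (1 - δ * K) + (δ * K) ^ J * ∫ θ, β θ ∂μ := by
  have hgeom : ∑ j ∈ range J, (δ * K) ^ j ≤ (1 - δ * K)⁻¹ := by
    simpa using geom_sum_Ico_le_of_lt_one (m := 0) (n := J) (mul_nonneg hδ hK) hδK
  rw [integral_add (integrable_finsetSum _ fun j _ ↦ (hM j).const_mul _) (hβ.const_mul _),
    integral_finsetSum _ fun j _ ↦ (hM j).const_mul _, integral_const_mul]
  gcongr
  calc ∑ j ∈ range J, ∫ θ, δ ^ j * M j θ ∂μ ≤ ∑ j ∈ range J, (δ * K) ^ j * R := by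
        gcongr with j
        rw [integral_const_mul, mul_pow, mul_assoc]
        gcongr
        exact hMR j
    _ ≤ R / (1 - δ * K) := by
        rw [← sum_mul, div_eq_inv_mul]
        exact mul_le_mul_of_nonneg_right hgeom hR

lemma exists_abs_sub_add_half_le {N : ℕ} [NeZero N] {x : ℝ} (h0 : 0 ≤ x) (hN : x ≤ N) :
    ∃ i : Fin N, |x - (i + 1 / 2)| ≤ 1 / 2 := by
  have hN1 : 1 ≤ N := Nat.pos_of_neZero N
  refine ⟨⟨min ⌊x⌋₊ (N - 1), by omega⟩, abs_sub_le_iff.2 ⟨?_, ?_⟩⟩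
  · have : x ≤ (min ⌊x⌋₊ (N - 1) : ℕ) + 1 := by
      rcases le_total ⌊x⌋₊ (N - 1) with h | h
      · rw [min_eq_left h]
        exact (Nat.lt_floor_add_one x).le
      · rw [min_eq_right h, Nat.cast_sub hN1]
        push_cast
        linarith
    simp only
    linarith
  · have : ((min ⌊x⌋₊ (N - 1) : ℕ) : ℝ) ≤ x :=
      (Nat.cast_le.2 (min_le_left _ _)).trans (Nat.floor_le h0)
    simp only
    linarith

lemma exists_net_Icc {a b : ℝ} (hab : a < b) (N : ℕ) [NeZero N] :
    ∃ p : Fin N → ℝ, (∀ i, p i ∈ Set.Icc a b) ∧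
      ∀ τ ∈ Set.Icc a b, ∃ i, |τ - p i| ≤ (b - a) / (2 * N) := by
  have hN : (0 : ℝ) < N := by simp [Nat.pos_of_neZero]
  set h := (b - a) / N
  have hh : 0 < h := div_pos (by linarith) hN
  have hNh : (N : ℝ) * h = b - a := mul_div_cancel₀ _ hN.ne'
  refine ⟨fun i ↦ a + (i + 1 / 2) * h, fun i ↦ ⟨?_, ?_⟩, fun τ hτ ↦ ?_⟩
  · have : (0 : ℝ) ≤ (i + 1 / 2) * h := by positivity
    linarith
  · have hi : (i : ℝ) + 1 / 2 ≤ N := by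
      have : (i : ℝ) + 1 ≤ N := by exact_mod_cast i.isLt
      linarith
    have := mul_le_mul_of_nonneg_right hi hh.le
    rw [hNh] at this
    linarith
  · obtain ⟨i, hi⟩ := exists_abs_sub_add_half_le (N := N) (x := (τ - a) / h)
      (div_nonneg (by linarith [hτ.1]) hh.le)
      ((div_le_iff₀ hh).2 (by rw [hNh]; linarith [hτ.2]))
    refine ⟨i, ?_⟩
    rw [show τ - (a + (i + 1 / 2) * h) = h * ((τ - a) / h - (i + 1 / 2)) by field_simp; ring,
      abs_mul, abs_of_pos hh, show (b - a) / (2 * N) = h * (1 / 2) by rw [← hNh]; field_simp]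
    gcongr

def planeWaveDeriv (ω τ₀ : ℝ) (n : ℕ) (τ : ℝ) : ℂ :=
  (Complex.I * ω) ^ n * Complex.exp (Complex.I * ω * (τ - τ₀))

lemma hasDerivAt_planeWaveDeriv (ω τ₀ : ℝ) (n : ℕ) (τ : ℝ) :
    HasDerivAt (planeWaveDeriv ω τ₀ n) (planeWaveDeriv ω τ₀ (n + 1) τ) τ := by
  have h : HasDerivAt (fun t : ℂ ↦ Complex.I * ω * (t - τ₀)) (Complex.I * ω) τ := by
    simpa using ((hasDerivAt_id (τ : ℂ)).sub_const (τ₀ : ℂ)).const_mul (Complex.I * ω)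
  unfold planeWaveDeriv
  exact ((h.cexp.comp_ofReal).const_mul _).congr_deriv (by ring)

lemma norm_planeWaveDeriv (ω τ₀ : ℝ) (n : ℕ) (τ : ℝ) : ‖planeWaveDeriv ω τ₀ n τ‖ = |ω| ^ n := by
  rw [planeWaveDeriv, norm_mul, norm_pow, norm_mul, Complex.norm_I, one_mul, Complex.norm_real,
    norm_eq_abs, show Complex.I * ω * (τ - τ₀) = ((ω * (τ - τ₀) : ℝ) : ℂ) * Complex.I by
      push_cast; ring, Complex.norm_exp_ofReal_mul_I, mul_one]

lemma norm_sub_planeWaveDeriv_sq_le {a b ω ω' K : ℝ} (hω : |ω| ≤ K) (hω' : |ω'| ≤ K)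
    (τ₀ : ℝ) (n : ℕ) (τ : ℝ) :
    ‖(a : ℂ) * planeWaveDeriv ω τ₀ n τ - b * planeWaveDeriv ω' τ₀ n τ‖ ^ 2
      ≤ (K ^ n) ^ 2 * (2 * (a ^ 2 + b ^ 2)) := by
  have hK : 0 ≤ K := (abs_nonneg ω).trans hω
  have h := norm_sub_le ((a : ℂ) * planeWaveDeriv ω τ₀ n τ) (b * planeWaveDeriv ω' τ₀ n τ)
  rw [norm_mul, norm_mul, norm_planeWaveDeriv, norm_planeWaveDeriv, Complex.norm_real,
    Complex.norm_real, norm_eq_abs, norm_eq_abs] at h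
  have hle : |a| * |ω| ^ n + |b| * |ω'| ^ n ≤ K ^ n * (|a| + |b|) := by
    rw [mul_add, mul_comm |a|, mul_comm |b|]
    gcongr
  calc _ ≤ (K ^ n * (|a| + |b|)) ^ 2 := by gcongr; exact h.trans hle
    _ ≤ (K ^ n) ^ 2 * (2 * (a ^ 2 + b ^ 2)) := by
      rw [mul_pow]
      gcongr
      nlinarith [sq_abs a, sq_abs b, sq_nonneg (|a| - |b|)]

lemma sum_norm_mul_sub_planeWaveDeriv_sq_le {κ : Type*} [Fintype κ] (A : ℂ) (a b : κ → ℝ)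
    {ω ω' : κ → ℝ} {K : ℝ} (hω : ∀ k, |ω k| ≤ K) (hω' : ∀ k, |ω' k| ≤ K) (τ₀ : ℝ) (n : ℕ)
    (τ : ℝ) :
    ∑ k, ‖A * ((a k : ℂ) * planeWaveDeriv (ω k) τ₀ n τ - b k * planeWaveDeriv (ω' k) τ₀ n τ)‖ ^ 2
      ≤ (K ^ n * (√2 * ‖A‖ * √(∑ k, (a k ^ 2 + b k ^ 2)))) ^ 2 := by
  calc _ ≤ ∑ k, ‖A‖ ^ 2 * ((K ^ n) ^ 2 * (2 * (a k ^ 2 + b k ^ 2))) := by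
        gcongr with k
        rw [norm_mul, mul_pow]
        gcongr
        exact norm_sub_planeWaveDeriv_sq_le (hω k) (hω' k) τ₀ n τ
    _ = _ := by
        rw [← mul_sum, ← mul_sum, ← mul_sum, mul_pow, mul_pow, mul_pow, sq_sqrt zero_le_two,
          sq_sqrt (by positivity)]
        ring

section RademacherProcess

variable {Θ : Type*} [MeasurableSpace Θ] {μ : Measure Θ} [IsProbabilityMeasure μ]
  {κ : Type*} [Fintype κ] {ε : κ → Θ → ℝ}

lemma integral_maxProj_sum_rademacher_mul_le (hε : ∀ k, Measurable (ε k))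
    (hindep : iIndepFun ε μ) (hrad : ∀ k, μ.map (ε k) = rademacherMeasure)
    {ι : Type*} [Fintype ι] [Nonempty ι] {q : ℕ} [NeZero q] {z : ι → κ → ℂ} {C : ℝ} (hC : 0 ≤ C)
    (hz : ∀ i, ∑ k, ‖z i k‖ ^ 2 ≤ C ^ 2) :
    ∫ θ, maxProj q (fun i ↦ ∑ k, (ε k θ : ℂ) * z i k) ∂μ
      ≤ C * √(2 * log (Fintype.card ι * q)) := by
  have hY (v : ι × Fin q) : HasSubgaussianMGF
      (fun θ ↦ (unitDir q v.2 * ∑ k, (ε k θ : ℂ) * z v.1 k).re) (C ^ 2).toNNReal μ :=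
    (hasSubgaussianMGF_re_mul_sum_rademacher hε hindep hrad (norm_unitDir q v.2).le _).mono
      ((Real.le_toNNReal_iff_coe_le (sq_nonneg C)).2 (by push_cast; exact hz v.1))
  refine (integral_sup'_le_of_hasSubgaussianMGF hY).trans_eq ?_
  rw [Fintype.card_prod, Fintype.card_fin, Nat.cast_mul, Real.coe_toNNReal _ (sq_nonneg _),
    mul_right_comm, sqrt_mul' _ (sq_nonneg _), sqrt_sq hC, mul_comm]

theorem integral_iSup_norm_sum_rademacher_mul_le (hε : ∀ k, Measurable (ε k))
    (hindep : iIndepFun ε μ) (hrad : ∀ k, μ.map (ε k) = rademacherMeasure)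
    {u : ℕ → κ → ℝ → ℂ} (hu : ∀ n k τ, HasDerivAt (u n k) (u (n + 1) k τ) τ)
    {s : Set ℝ} (hs : Convex ℝ s) {K σ : ℝ} (hK : 0 ≤ K) (hσ : 0 ≤ σ)
    (hvar : ∀ n, ∀ τ ∈ s, ∑ k, ‖u n k τ‖ ^ 2 ≤ (K ^ n * σ) ^ 2)
    {ι : Type*} [Fintype ι] [Nonempty ι] {p : ι → ℝ} (hp : ∀ i, p i ∈ s) {δ : ℝ} (hδ : 0 ≤ δ)
    (hδK : δ * K < 1) (hnet : ∀ τ ∈ s, ∃ i, |τ - p i| ≤ δ) {q : ℕ} [NeZero q] (hq : 2 < q) :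
    ∫ θ, ⨆ τ ∈ s, ‖∑ k, (ε k θ : ℂ) * u 0 k τ‖ ∂μ
      ≤ σ * √(2 * log (Fintype.card ι * q)) / (cos (π / q) * (1 - δ * K)) := by
  set Z : ℕ → ℝ → Θ → ℂ := fun n τ θ ↦ ∑ k, (ε k θ : ℂ) * u n k τ
  set M : ℕ → Θ → ℝ := fun n θ ↦ maxProj q (fun i ↦ Z n (p i) θ) / cos (π / q)
  set β : Θ → ℝ := fun θ ↦ σ * ∑ k, |ε k θ|
  have hcos := cos_pi_div_pos hq
  have hM (n : ℕ) : Integrable (M n) μ := (integrable_sup' fun v : ι × Fin q ↦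
    (hasSubgaussianMGF_re_mul_sum_rademacher hε hindep hrad (norm_unitDir q v.2).le
      fun k ↦ u n k (p v.1)).integrable).div_const _
  have hMσ (n : ℕ) :
      ∫ θ, M n θ ∂μ ≤ K ^ n * (σ * √(2 * log (Fintype.card ι * q)) / cos (π / q)) := by
    rw [integral_div, ← mul_div_assoc, ← mul_assoc]
    gcongr
    exact integral_maxProj_sum_rademacher_mul_le hε hindep hrad
      (z := fun i k ↦ u n k (p i)) (by positivity) fun i ↦ hvar n _ (hp i)
  have hβ : Integrable β μ := (integrable_finsetSum _ fun k _ ↦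
    (HasSubgaussianMGF.of_map_eq_rademacherMeasure (hε k).aemeasurable
      (hrad k)).integrable.abs).const_mul σ
  have hsup (J : ℕ) (θ : Θ) :
      ⨆ τ ∈ s, ‖Z 0 τ θ‖ ≤ ∑ j ∈ range J, δ ^ j * M j θ + (δ * K) ^ J * β θ :=
    iSup_norm_le_sum_maxProj (Z := (Z · · θ)) (β := β θ) (fun n τ ↦ HasDerivAt.fun_sum fun k _ ↦
      (hu n k τ).const_mul _) hs hp hnet (fun n τ hτ ↦ by
        simpa only [mul_assoc] using norm_sum_ofReal_mul_le (ε · θ) (by positivity) (hvar n τ hτ))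
      hq J
  rw [← div_div]
  refine le_of_forall_le_add_pow_mul (b := ∫ θ, β θ ∂μ) (mul_nonneg hδ hK) hδK fun J ↦ ?_
  exact (integral_mono_of_nonneg (ae_of_all _ fun θ ↦ Real.iSup_nonneg fun τ ↦
      Real.iSup_nonneg fun _ ↦ norm_nonneg _)
    ((integrable_finsetSum _ fun j _ ↦ (hM j).const_mul _).add (hβ.const_mul _))
    (ae_of_all _ (hsup J))).trans
    (integral_sum_pow_mul_add_le hM hβ hδ hK hδK (by positivity) hMσ J)

theorem integral_iSup_norm_sum_rademacher_mul_planeWave_le (hε : ∀ k, Measurable (ε k))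
    (hindep : iIndepFun ε μ) (hrad : ∀ k, μ.map (ε k) = rademacherMeasure) (A : ℂ) (a b : κ → ℝ)
    {ω ω' : κ → ℝ} {K : ℝ} (hK : 0 < K) (hω : ∀ k, |ω k| ≤ K) (hω' : ∀ k, |ω' k| ≤ K) (τ₀ : ℝ)
    {s : Set ℝ} (hs : Convex ℝ s) {ι : Type*} [Fintype ι] [Nonempty ι] {p : ι → ℝ}
    (hp : ∀ i, p i ∈ s) (hnet : ∀ τ ∈ s, ∃ i, |τ - p i| ≤ (4 * K)⁻¹) :
    ∫ θ, ⨆ τ ∈ s, ‖A * ∑ k, (ε k θ : ℂ) *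
        ((a k : ℂ) * planeWaveDeriv (ω k) τ₀ 0 τ - b k * planeWaveDeriv (ω' k) τ₀ 0 τ)‖ ∂μ
      ≤ ‖A‖ * √(∑ k, (a k ^ 2 + b k ^ 2))
        * (8 / 3 * √(log (Fintype.card ι * 8)) / cos (π / 8)) := by
  have h := integral_iSup_norm_sum_rademacher_mul_le hε hindep hrad
    (u := fun n k τ ↦ A * ((a k : ℂ) * planeWaveDeriv (ω k) τ₀ n τ
      - b k * planeWaveDeriv (ω' k) τ₀ n τ))
    (fun n k τ ↦ (((hasDerivAt_planeWaveDeriv _ τ₀ n τ).const_mul _).sub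
      ((hasDerivAt_planeWaveDeriv _ τ₀ n τ).const_mul _)).const_mul A)
    hs hK.le (by positivity) (fun n τ _ ↦ sum_norm_mul_sub_planeWaveDeriv_sq_le A a b hω hω' τ₀ n τ)
    hp (by positivity) (by field_simp; norm_num) hnet (q := 8) (by norm_num)
  simp_rw [mul_sum, mul_left_comm A]
  refine h.trans_eq ?_
  rw [sqrt_mul zero_le_two, show (4 * K)⁻¹ * K = 1 / 4 by field_simp]
  field_simp
  rw [sq_sqrt zero_le_two]
  norm_num
  ring

end RademacherProcess

lemma one_lt_log_three : 1 < log 3 :=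
  (lt_log_iff_exp_lt (by norm_num)).2 (exp_one_lt_d9.trans (by norm_num))

lemma eight_thirds_mul_sqrt_log_ceil_div_cos_le {x : ℝ} (hx : 3 ≤ x) :
    8 / 3 * √(log (⌈x⌉₊ * 8)) / cos (π / 8) ≤ 3 * √(log (2 * x)) + 1.61 := by
  suffices ∀ L V : ℝ, 6 ≤ L → 0 < V → V ≤ 16 / 3 * L →
      8 / 3 * √(log V) / cos (π / 8) ≤ 3 * √(log L) + 1.61 from
    this _ _ (by linarith) (by positivity) (by linarith [Nat.ceil_lt_add_one (by linarith : 0 ≤ x)])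
  intro L V hL hV hVL
  have hlog6 : log 6 = log 2 + log 3 := by rw [← log_mul (by norm_num) (by norm_num)]; norm_num
  have hlog16_3 : log (16 / 3) = 4 * log 2 - log 3 := by
    rw [log_div (by norm_num) (by norm_num), show (16 : ℝ) = 2 ^ 4 by norm_num, log_pow]; norm_num
  have hx : 1.69 ≤ log L := by
    linarith [one_lt_log_three, log_two_gt_d9, log_le_log (by norm_num) hL]
  have hlogV : log V ≤ log L + 1.7726 := by
    have := log_le_log hV hVL
    rw [log_mul (by norm_num) (by linarith), hlog16_3] at this
    linarith [one_lt_log_three, log_two_lt_d9]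
  set y := √(log L)
  have hy : 1.3 ≤ y := le_sqrt_of_sq_le (by linarith)
  have hy2 : y ^ 2 = log L := sq_sqrt (by linarith)
  have hs : (1.414 : ℝ) ≤ √2 := le_sqrt_of_sq_le (by norm_num)
  have hcos : cos (π / 8) ^ 2 = (2 + √2) / 4 := by
    rw [cos_pi_div_eight, div_pow, sq_sqrt (by positivity)]
    norm_num
  have hcos_pos : 0 < cos (π / 8) := by rw [cos_pi_div_eight]; positivity
  rw [div_le_iff₀ hcos_pos]
  calc 8 / 3 * √(log V) ≤ 8 / 3 * √(y ^ 2 + 1.7726) := by gcongr; linarith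
    _ ≤ (3 * y + 1.61) * cos (π / 8) := by
      refine (pow_le_pow_iff_left₀ (by positivity) (by positivity) two_ne_zero).1 ?_
      rw [mul_pow, mul_pow, sq_sqrt (by positivity), hcos]
      nlinarith [mul_nonneg (sub_nonneg.2 hs) (sq_nonneg (3 * y + 1.61)),
        mul_nonneg (sub_nonneg.2 hy) (sub_nonneg.2 hy)]

theorem rademacher_process_expectation_general
    {Θ : Type*} [MeasurableSpace Θ] (μ : Measure Θ) [IsProbabilityMeasure μ]
    (ωmax τmin τmax : ℝ) (hωmax : 0 < ωmax) (hTlen : τmin < τmax)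
    (shat : ℝ → ℂ)
    (A : ℂ) (τ₀ : ℝ)
    (hΩT : 3 ≤ (2 * ωmax) * (τmax - τmin))
    (m : ℕ)
    (ωs ωs' : Fin m → ℝ)
    (hωs : ∀ k, ωs k ∈ Set.Icc (-ωmax) ωmax)
    (hωs' : ∀ k, ωs' k ∈ Set.Icc (-ωmax) ωmax)
    (ε : Fin m → Θ → ℝ) (hεmeas : ∀ k, Measurable (ε k))
    (hindep : iIndepFun ε μ)
    (hrad : ∀ k, μ.map (ε k)
      = (2 : ENNReal)⁻¹ • (Measure.dirac (1 : ℝ) + Measure.dirac (-1 : ℝ)))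
    (Z' : ℝ → Θ → ℂ)
    (hZ' : ∀ τ θ, Z' τ θ
      = A * ∑ k : Fin m, (ε k θ : ℂ)
          * ((‖shat (ωs k)‖ ^ 2 : ℂ) * Complex.exp (Complex.I * (ωs k) * (τ - τ₀))
            - (‖shat (ωs' k)‖ ^ 2 : ℂ) * Complex.exp (Complex.I * (ωs' k) * (τ - τ₀))))
    (M₃ : ℝ)
    (hM₃ : M₃ = Real.sqrt (∑ k : Fin m, (‖shat (ωs k)‖ ^ 4 + ‖shat (ωs' k)‖ ^ 4))) :
    ∫ θ, (⨆ τ ∈ Set.Icc τmin τmax, ‖Z' τ θ‖) ∂μ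
      ≤ ‖A‖ * M₃
        * (3 * Real.sqrt (Real.log (2 * ((2 * ωmax) * (τmax - τmin)))) + 1.61) := by
  set x := (2 * ωmax) * (τmax - τmin)
  set N := ⌈x⌉₊
  have : NeZero N := ⟨(Nat.ceil_pos.2 (by linarith)).ne'⟩
  obtain ⟨p, hp, hnet⟩ := exists_net_Icc hTlen N
  have hδ : (τmax - τmin) / (2 * N) ≤ (4 * ωmax)⁻¹ := by
    rw [inv_eq_one_div, div_le_div_iff₀ (by positivity) (by positivity)]
    linarith [Nat.le_ceil x]
  have hZ'wave (τ : ℝ) (θ : Θ) : Z' τ θ = A * ∑ k, (ε k θ : ℂ) *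
      (((‖shat (ωs k)‖ ^ 2 : ℝ) : ℂ) * planeWaveDeriv (ωs k) τ₀ 0 τ
        - ((‖shat (ωs' k)‖ ^ 2 : ℝ) : ℂ) * planeWaveDeriv (ωs' k) τ₀ 0 τ) := by
    simp [hZ', planeWaveDeriv]
  have hM₃' : M₃ = √(∑ k, ((‖shat (ωs k)‖ ^ 2) ^ 2 + (‖shat (ωs' k)‖ ^ 2) ^ 2)) := by
    simp only [hM₃, ← pow_mul]
  simp_rw [hZ'wave]
  calc _ ≤ ‖A‖ * M₃ * (8 / 3 * √(log (Fintype.card (Fin N) * 8)) / cos (π / 8)) := by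
        rw [hM₃']
        exact integral_iSup_norm_sum_rademacher_mul_planeWave_le hεmeas hindep hrad A
          (fun k ↦ ‖shat (ωs k)‖ ^ 2) (fun k ↦ ‖shat (ωs' k)‖ ^ 2) hωmax
          (fun k ↦ abs_le.2 (hωs k)) (fun k ↦ abs_le.2 (hωs' k)) τ₀ (convex_Icc _ _) hp
          fun τ hτ ↦ (hnet τ hτ).imp fun i hi ↦ hi.trans hδ
    _ ≤ ‖A‖ * M₃ * (3 * √(log (2 * x)) + 1.61) := by
        rw [Fintype.card_fin]
        have : 0 ≤ M₃ := hM₃ ▸ sqrt_nonneg _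
        gcongr
        exact eight_thirds_mul_sqrt_log_ceil_div_cos_le hΩT

/-- **Expected supremum of the Rademacher process.**
Suppose `|Ω||T| ≥ 3`.  Then `E[sup_{τ∈T} |Z'(τ)|] ≤ |A|M₃(3√(log(2|Ω||T|)) + 1.61)`. -/
theorem rademacher_process_expectation
    {Θ : Type*} [MeasurableSpace Θ] (μ : Measure Θ) [IsProbabilityMeasure μ]
    (ωmax τmin τmax : ℝ) (hωmax : 0 < ωmax) (hTlen : τmin < τmax)
    (shat : ℝ → ℂ) (hmeas : Measurable shat)
    (hbd : ∃ C : ℝ, ∀ x : ℝ, ‖shat x‖ ≤ C)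
    (hvanish : ∀ x : ℝ, x ∉ Set.Icc (-ωmax) ωmax → shat x = 0)
    (A : ℂ) (hA : A ≠ 0) (τ₀ : ℝ) (hτ₀ : τ₀ ∈ Set.Icc τmin τmax)
    (hΩT : 3 ≤ (2 * ωmax) * (τmax - τmin))
    (m : ℕ) (hm : 0 < m)
    (ωs ωs' : Fin m → ℝ)
    (hωs : ∀ k, ωs k ∈ Set.Icc (-ωmax) ωmax)
    (hωs' : ∀ k, ωs' k ∈ Set.Icc (-ωmax) ωmax)
    (hpos : 0 < ∑ k : Fin m, (‖shat (ωs k)‖ ^ 4 + ‖shat (ωs' k)‖ ^ 4))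
    (ε : Fin m → Θ → ℝ) (hεmeas : ∀ k, Measurable (ε k))
    (hindep : iIndepFun ε μ)
    (hrad : ∀ k, μ.map (ε k)
      = (2 : ENNReal)⁻¹ • (Measure.dirac (1 : ℝ) + Measure.dirac (-1 : ℝ)))
    (Z' : ℝ → Θ → ℂ)
    (hZ' : ∀ τ θ, Z' τ θ
      = A * ∑ k : Fin m, (ε k θ : ℂ)
          * ((‖shat (ωs k)‖ ^ 2 : ℂ) * Complex.exp (Complex.I * (ωs k) * (τ - τ₀))
            - (‖shat (ωs' k)‖ ^ 2 : ℂ) * Complex.exp (Complex.I * (ωs' k) * (τ - τ₀))))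
    (M₃ : ℝ)
    (hM₃ : M₃ = Real.sqrt (∑ k : Fin m, (‖shat (ωs k)‖ ^ 4 + ‖shat (ωs' k)‖ ^ 4))) :
    ∫ θ, (⨆ τ ∈ Set.Icc τmin τmax, ‖Z' τ θ‖) ∂μ
      ≤ ‖A‖ * M₃
        * (3 * Real.sqrt (Real.log (2 * ((2 * ωmax) * (τmax - τmin)))) + 1.61) :=
  rademacher_process_expectation_general μ ωmax τmin τmax hωmax hTlen shat A τ₀ hΩT m ωs ωs' hωs
    hωs' ε hεmeas hindep hrad Z' hZ' M₃ hM₃
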